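/- arXiv:2502.02017 — 3 statements merged into one kernel-verified Lean document; each statement's English description precedes it below -/
import Mathlib

section
/- Let H be a nonempty set of hypotheses and P, Q probability measures on X. Then for all h, h′ ∈ H, |ε_P(h, h′) − ε_Q(h, h′)| ≤ (1/2) · d_{HΔH}(P, Q). -/
open MeasureTheory

/-- The `H`-divergence `d_H(P, Q) = 2 · sup_{h ∈ H} |P {h = true} − Q {h = true}|`. -/
noncomputable def hDiv {X : Type*} [MeasurableSpace X]
    (H : Set (X → Bool)) (P Q : Measure X) : ℝ :=
  2 * sSup ((fun h => |(P {x | h x = true}).toReal - (Q {x | h x = true}).toReal|) '' H)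

/-- The symmetric-difference class `HΔH = { x ↦ xor (h x) (h′ x) | h, h′ ∈ H }`. -/
def symmDiffClass {X : Type*} (H : Set (X → Bool)) : Set (X → Bool) :=
  {g | ∃ h ∈ H, ∃ h' ∈ H, g = fun x => xor (h x) (h' x)}

/-- For all `h, h′ ∈ H`, `|ε_P(h, h′) − ε_Q(h, h′)| ≤ (1/2) · d_{HΔH}(P, Q)`. -/
theorem abs_disagreement_sub_disagreement_le_half_hDiv {X : Type*} [MeasurableSpace X]
    (H : Set (X → Bool)) (hne : H.Nonempty) (hmeas : ∀ h ∈ H, Measurable h)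
    (P Q : Measure X) [IsProbabilityMeasure P] [IsProbabilityMeasure Q]
    (h h' : X → Bool) (hh : h ∈ H) (hh' : h' ∈ H) :
    |(P {x | h x ≠ h' x}).toReal - (Q {x | h x ≠ h' x}).toReal|
      ≤ (1 / 2) * hDiv (symmDiffClass H) P Q := by
  set g : X → Bool := fun x => xor (h x) (h' x) with hg
  have hgmem : g ∈ symmDiffClass H := ⟨h, hh, h', hh', rfl⟩
  have hset : {x | h x ≠ h' x} = {x | g x = true} := by
    ext x
    simp only [Set.mem_setOf_eq, hg]
    cases h x <;> cases h' x <;> simp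
  have hbdd : BddAbove ((fun f => |(P {x | f x = true}).toReal - (Q {x | f x = true}).toReal|) '' symmDiffClass H) := by
    refine ⟨1, ?_⟩
    rintro r ⟨f, -, rfl⟩
    have h1 : (P {x | f x = true}).toReal ≤ 1 := by
      rw [← ENNReal.toReal_one]
      exact ENNReal.toReal_mono ENNReal.one_ne_top prob_le_one
    have h2 : (Q {x | f x = true}).toReal ≤ 1 := by
      rw [← ENNReal.toReal_one]
      exact ENNReal.toReal_mono ENNReal.one_ne_top prob_le_one
    have h3 : (0:ℝ) ≤ (P {x | f x = true}).toReal := ENNReal.toReal_nonneg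
    have h4 : (0:ℝ) ≤ (Q {x | f x = true}).toReal := ENNReal.toReal_nonneg
    rw [abs_sub_le_iff]
    constructor <;> linarith
  have hle : |(P {x | g x = true}).toReal - (Q {x | g x = true}).toReal|
      ≤ sSup ((fun f => |(P {x | f x = true}).toReal - (Q {x | f x = true}).toReal|) '' symmDiffClass H) :=
    le_csSup hbdd ⟨g, hgmem, rfl⟩
  rw [hset, hDiv]
  linarith
end

section
/- Let H be a nonempty set of hypotheses, let P, Q be probability measures on X with measurable labeling functions f_P, f_Q : X → Bool, and set λ := inf_{h′ ∈ H} ( ε_P(h′; f_P) + ε_Q(h′; f_Q) ). Then for every h ∈ H, ε_Q(h; f_Q) ≤ ε_P(h; f_P) + (1/2) · d_{HΔH}(P, Q) + λ. -/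
open MeasureTheory

lemma toReal_measure_le_add {X : Type*} [MeasurableSpace X] (μ : Measure X) [IsFiniteMeasure μ]
    {A B C : Set X} (hsub : A ⊆ B ∪ C) :
    (μ A).toReal ≤ (μ B).toReal + (μ C).toReal := by
  have h1 : μ A ≤ μ B + μ C := (measure_mono hsub).trans (measure_union_le _ _)
  have h2 : μ B + μ C ≠ ⊤ :=
    ENNReal.add_ne_top.mpr ⟨measure_ne_top μ B, measure_ne_top μ C⟩
  have := ENNReal.toReal_mono h2 h1
  rwa [ENNReal.toReal_add (measure_ne_top μ B) (measure_ne_top μ C)] at this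

/-- With `λ = inf_{h′ ∈ H} (ε_P(h′; f_P) + ε_Q(h′; f_Q))`, every `h ∈ H` satisfies
`ε_Q(h; f_Q) ≤ ε_P(h; f_P) + (1/2) · d_{HΔH}(P, Q) + λ`. -/
theorem risk_target_le_risk_source_add_half_hDiv_add_idealRisk {X : Type*} [MeasurableSpace X]
    (H : Set (X → Bool)) (hne : H.Nonempty) (hmeas : ∀ h ∈ H, Measurable h)
    (P Q : Measure X) [IsProbabilityMeasure P] [IsProbabilityMeasure Q]
    (fP fQ : X → Bool) (hfP : Measurable fP) (hfQ : Measurable fQ)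
    (h : X → Bool) (hh : h ∈ H) :
    (Q {x | h x ≠ fQ x}).toReal ≤
      (P {x | h x ≠ fP x}).toReal + (1 / 2) * hDiv (symmDiffClass H) P Q +
        sInf ((fun h' => (P {x | h' x ≠ fP x}).toReal + (Q {x | h' x ≠ fQ x}).toReal) '' H) := by
  set S := (fun g : X → Bool =>
      |(P {x | g x = true}).toReal - (Q {x | g x = true}).toReal|) '' symmDiffClass H with hS
  have hDhalf : (1 / 2) * hDiv (symmDiffClass H) P Q = sSup S := by
    simp [hDiv, hS]
  have hbdd : BddAbove S := by
    refine ⟨2, ?_⟩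
    rintro r ⟨g, -, rfl⟩
    have hP : (P {x | g x = true}).toReal ≤ 1 := by
      simpa using ENNReal.toReal_mono ENNReal.one_ne_top (prob_le_one (μ := P))
    have hQ : (Q {x | g x = true}).toReal ≤ 1 := by
      simpa using ENNReal.toReal_mono ENNReal.one_ne_top (prob_le_one (μ := Q))
    have hP0 : 0 ≤ (P {x | g x = true}).toReal := ENNReal.toReal_nonneg
    have hQ0 : 0 ≤ (Q {x | g x = true}).toReal := ENNReal.toReal_nonneg
    rw [abs_le]; constructor <;> linarith
  rw [hDhalf]
  rw [add_assoc, ← sub_le_iff_le_add', ← sub_le_iff_le_add']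
  apply le_csInf (hne.image _)
  rintro r ⟨h', hh', rfl⟩
  simp only [sub_le_iff_le_add']
  -- triangle inequality: Q{h≠fQ} ≤ Q{h≠h'} + Q{h'≠fQ}
  have t1 : (Q {x | h x ≠ fQ x}).toReal ≤
      (Q {x | h x ≠ h' x}).toReal + (Q {x | h' x ≠ fQ x}).toReal := by
    apply toReal_measure_le_add
    intro x hx
    by_cases hc : h x = h' x
    · right; simp only [Set.mem_setOf_eq] at *; rw [← hc]; exact hx
    · left; exact hc
  -- disagreement bound via sSup
  have hgmem : (fun x => xor (h x) (h' x)) ∈ symmDiffClass H := ⟨h, hh, h', hh', rfl⟩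
  have hset : {x | (fun x => xor (h x) (h' x)) x = true} = {x | h x ≠ h' x} := by
    ext x; simp [Bool.xor_iff_ne]
  have t2 : (Q {x | h x ≠ h' x}).toReal ≤ (P {x | h x ≠ h' x}).toReal + sSup S := by
    have hmem : |(P {x | h x ≠ h' x}).toReal - (Q {x | h x ≠ h' x}).toReal| ∈ S := by
      refine ⟨_, hgmem, ?_⟩
      simp only [hset]
    have := le_csSup hbdd hmem
    have habs : (Q {x | h x ≠ h' x}).toReal - (P {x | h x ≠ h' x}).toReal ≤
        |(P {x | h x ≠ h' x}).toReal - (Q {x | h x ≠ h' x}).toReal| := by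
      rw [abs_sub_comm]; exact le_abs_self _
    linarith
  -- P{h≠h'} ≤ P{h≠fP} + P{h'≠fP}
  have t3 : (P {x | h x ≠ h' x}).toReal ≤
      (P {x | h x ≠ fP x}).toReal + (P {x | h' x ≠ fP x}).toReal := by
    apply toReal_measure_le_add
    intro x hx
    by_cases hc : h x = fP x
    · right; simp only [Set.mem_setOf_eq] at *; rw [← hc]; exact fun e => hx e.symm
    · left; exact hc
  linarith
end

section
/- Let H be a nonempty set of hypotheses that is closed under pointwise XOR (so that HΔH ⊆ H). Let P_1, …, P_M be source probability measures on X with measurable labeling functions f_1, …, f_M : X → Bool, and let P_t be a target probability measure with measurable labeling f_t : X → Bool. Set ρ := sup_{π′, π″ ∈ Δ_M} d_H(P_{π′}, P_{π″}). Then for every π ∈ Δ_M and every h ∈ H: ε_{P_t}(h; f_t) ≤ Σ_{i=1}^M π_i · ε_{P_i}(h; f_i) + (d_H(P_t, P_π) + ρ)/2 + λ_π, where λ_π := inf_{h′ ∈ H} ( ε_{P_t}(h′; f_t) + Σ_{i=1}^M π_i · ε_{P_i}(h′; f_i) ). -/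
open MeasureTheory

/-- Probability of a set has `toReal` at most 1. -/
lemma prob_toReal_le_one {X : Type*} [MeasurableSpace X] (μ : Measure X)
    [IsProbabilityMeasure μ] (s : Set X) : (μ s).toReal ≤ 1 := by
  have h1 : μ s ≤ 1 := prob_le_one
  calc (μ s).toReal ≤ (1 : ENNReal).toReal := ENNReal.toReal_mono ENNReal.one_ne_top h1
    _ = 1 := ENNReal.toReal_one

/-- Triangle inequality for disagreement probabilities. -/
lemma tri_disagree {X : Type*} [MeasurableSpace X] (μ : Measure X)
    [IsProbabilityMeasure μ] (a b c : X → Bool) :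
    (μ {x | a x ≠ c x}).toReal ≤
      (μ {x | a x ≠ b x}).toReal + (μ {x | b x ≠ c x}).toReal := by
  have hsub : {x | a x ≠ c x} ⊆ {x | a x ≠ b x} ∪ {x | b x ≠ c x} := by
    intro x hx
    by_contra hc
    simp only [Set.mem_union, Set.mem_setOf_eq] at hc
    push_neg at hc
    exact hx (hc.1.trans hc.2)
  have h1 : μ {x | a x ≠ c x} ≤ μ {x | a x ≠ b x} + μ {x | b x ≠ c x} :=
    (measure_mono hsub).trans (measure_union_le _ _)
  have h2 := ENNReal.toReal_mono
    (ENNReal.add_ne_top.2 ⟨measure_ne_top μ _, measure_ne_top μ _⟩) h1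
  rwa [ENNReal.toReal_add (measure_ne_top μ _) (measure_ne_top μ _)] at h2

/-- The mixture `P_π = Σ_i π_i • P_i` of the measures `P_i` with weights `π`. -/
noncomputable def mixture {X : Type*} [MeasurableSpace X] {M : ℕ}
    (P : Fin M → Measure X) (π : Fin M → ℝ) : Measure X :=
  ∑ i, ENNReal.ofReal (π i) • P i

/-- For `H` closed under pointwise XOR, with
`ρ = sup_{π′, π″ ∈ Δ_M} d_H(P_{π′}, P_{π″})` and
`λ_π = inf_{h′ ∈ H} (ε_{P_t}(h′; f_t) + Σ_i π_i · ε_{P_i}(h′; f_i))`, every `π ∈ Δ_M`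
and `h ∈ H` satisfy
`ε_{P_t}(h; f_t) ≤ Σ_i π_i · ε_{P_i}(h; f_i) + (d_H(P_t, P_π) + ρ)/2 + λ_π`. -/
theorem target_risk_le_weighted_source_risk_add {X : Type*} [MeasurableSpace X] {M : ℕ}
    (H : Set (X → Bool)) (hne : H.Nonempty) (hmeas : ∀ h ∈ H, Measurable h)
    (hxor : symmDiffClass H ⊆ H)
    (P : Fin M → Measure X) (hP : ∀ i, IsProbabilityMeasure (P i))
    (f : Fin M → X → Bool) (hf : ∀ i, Measurable (f i))
    (Pt : Measure X) [IsProbabilityMeasure Pt]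
    (ft : X → Bool) (hft : Measurable ft)
    (ρ : ℝ)
    (hρ : ρ = sSup {d : ℝ | ∃ π' ∈ stdSimplex ℝ (Fin M), ∃ π'' ∈ stdSimplex ℝ (Fin M),
        d = hDiv H (mixture P π') (mixture P π'')})
    (π : Fin M → ℝ) (hπ : π ∈ stdSimplex ℝ (Fin M))
    (h : X → Bool) (hh : h ∈ H) :
    (Pt {x | h x ≠ ft x}).toReal ≤
      (∑ i, π i * (P i {x | h x ≠ f i x}).toReal) +
        (hDiv H Pt (mixture P π) + ρ) / 2 +
        sInf ((fun h' => (Pt {x | h' x ≠ ft x}).toReal +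
          ∑ i, π i * (P i {x | h' x ≠ f i x}).toReal) '' H) := by
  have hπ1 : ∑ i, π i = 1 := hπ.2
  have hπ0 : ∀ i, 0 ≤ π i := hπ.1
  -- the mixture is a probability measure
  have hmixprob : IsProbabilityMeasure (mixture P π) := by
    constructor
    have : (mixture P π) Set.univ = ∑ i, ENNReal.ofReal (π i) * P i Set.univ := by
      simp [mixture]
    rw [this]
    have : ∀ i, ENNReal.ofReal (π i) * P i Set.univ = ENNReal.ofReal (π i) := by
      intro i
      have := (hP i).measure_univ
      rw [this, mul_one]
    simp_rw [this]
    rw [← ENNReal.ofReal_sum_of_nonneg (fun i _ => hπ0 i), hπ1, ENNReal.ofReal_one]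
  -- ρ is nonneg
  have hρ0 : 0 ≤ ρ := by
    rw [hρ]
    apply Real.sSup_nonneg
    rintro d ⟨π', _, π'', _, rfl⟩
    unfold hDiv
    have : 0 ≤ sSup ((fun h => |((mixture P π') {x | h x = true}).toReal -
        ((mixture P π'') {x | h x = true}).toReal|) '' H) := by
      apply Real.sSup_nonneg
      rintro y ⟨g, _, rfl⟩
      exact abs_nonneg _
    linarith
  -- key pointwise bound for each h' ∈ H
  have key : ∀ h' ∈ H, (Pt {x | h x ≠ ft x}).toReal ≤
      (∑ i, π i * (P i {x | h x ≠ f i x}).toReal) + hDiv H Pt (mixture P π) / 2 +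
        ((Pt {x | h' x ≠ ft x}).toReal + ∑ i, π i * (P i {x | h' x ≠ f i x}).toReal) := by
    intro h' hh'
    set g : X → Bool := fun x => xor (h x) (h' x) with hg
    have hgH : g ∈ H := hxor ⟨h, hh, h', hh', rfl⟩
    have hgmeas : Measurable g := hmeas g hgH
    have hset : {x | h x ≠ h' x} = {x | g x = true} := by
      ext x
      simp only [Set.mem_setOf_eq, hg]
      cases hx : h x <;> cases hx' : h' x <;> simp
    have hmeas_set : MeasurableSet {x | g x = true} :=
      hgmeas (by trivial : MeasurableSet ({true} : Set Bool))
    -- step A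
    have stepA : (Pt {x | h x ≠ ft x}).toReal ≤
        (Pt {x | h x ≠ h' x}).toReal + (Pt {x | h' x ≠ ft x}).toReal :=
      tri_disagree Pt h h' ft
    -- step B: Pt disagreement ≤ mixture disagreement + hDiv/2
    have stepB : (Pt {x | h x ≠ h' x}).toReal ≤
        ((mixture P π) {x | h x ≠ h' x}).toReal + hDiv H Pt (mixture P π) / 2 := by
      have hbdd : BddAbove ((fun h => |(Pt {x | h x = true}).toReal -
          ((mixture P π) {x | h x = true}).toReal|) '' H) := by
        refine ⟨2, ?_⟩
        rintro y ⟨k, _, rfl⟩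
        have h1 : (Pt {x | k x = true}).toReal ≤ 1 := prob_toReal_le_one Pt _
        have h2 : ((mixture P π) {x | k x = true}).toReal ≤ 1 := prob_toReal_le_one _ _
        have h3 : 0 ≤ (Pt {x | k x = true}).toReal := ENNReal.toReal_nonneg
        have h4 : 0 ≤ ((mixture P π) {x | k x = true}).toReal := ENNReal.toReal_nonneg
        rw [abs_sub_le_iff]
        constructor <;> linarith
      have hmem : |(Pt {x | g x = true}).toReal - ((mixture P π) {x | g x = true}).toReal| ∈
          ((fun h => |(Pt {x | h x = true}).toReal -
            ((mixture P π) {x | h x = true}).toReal|) '' H) := ⟨g, hgH, rfl⟩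
      have hle := le_csSup hbdd hmem
      have habs : (Pt {x | g x = true}).toReal - ((mixture P π) {x | g x = true}).toReal ≤
          |(Pt {x | g x = true}).toReal - ((mixture P π) {x | g x = true}).toReal| :=
        le_abs_self _
      unfold hDiv
      rw [hset]
      linarith
    -- step C: evaluate mixture
    have stepC : ((mixture P π) {x | h x ≠ h' x}).toReal =
        ∑ i, π i * (P i {x | h x ≠ h' x}).toReal := by
      rw [hset]
      have happ : (mixture P π) {x | g x = true} =
          ∑ i, ENNReal.ofReal (π i) * P i {x | g x = true} := by
        simp [mixture]
      rw [happ, ENNReal.toReal_sum]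
      · apply Finset.sum_congr rfl
        intro i _
        rw [ENNReal.toReal_mul, ENNReal.toReal_ofReal (hπ0 i)]
      · intro i _
        exact ENNReal.mul_ne_top ENNReal.ofReal_ne_top (measure_ne_top _ _)
    -- step D
    have stepD : ∑ i, π i * (P i {x | h x ≠ h' x}).toReal ≤
        (∑ i, π i * (P i {x | h x ≠ f i x}).toReal) +
          ∑ i, π i * (P i {x | h' x ≠ f i x}).toReal := by
      rw [← Finset.sum_add_distrib]
      apply Finset.sum_le_sum
      intro i _
      rw [← mul_add]
      apply mul_le_mul_of_nonneg_left _ (hπ0 i)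
      have := (hP i)
      have t1 : (P i {x | h x ≠ h' x}).toReal ≤
          (P i {x | h x ≠ f i x}).toReal + (P i {x | f i x ≠ h' x}).toReal :=
        tri_disagree (P i) h (f i) h'
      have t2 : {x | f i x ≠ h' x} = {x | h' x ≠ f i x} := by
        ext x; simp [ne_comm]
      rw [t2] at t1
      exact t1
    linarith
  -- combine over the infimum
  have hInf : (Pt {x | h x ≠ ft x}).toReal -
      ((∑ i, π i * (P i {x | h x ≠ f i x}).toReal) + hDiv H Pt (mixture P π) / 2) ≤
      sInf ((fun h' => (Pt {x | h' x ≠ ft x}).toReal +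
          ∑ i, π i * (P i {x | h' x ≠ f i x}).toReal) '' H) := by
    apply le_csInf (hne.image _)
    rintro b ⟨h', hh', rfl⟩
    have := key h' hh'
    linarith
  linarith
end
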